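/- Let Z = {P_1,...,P_r} be distinct points in P^2 with multiplicity vectors m = (m_1,...,m_r) of nonnegative integers. Suppose C is a nonzero homogeneous polynomial of degree β = α(I(mZ)) vanishing to order at least m_i at each P_i, and C = C_1 · C_2 is a factorization into nonzero homogeneous polynomials. Let m_i^(j) = ord_{P_i} C_j and β_j = deg C_j. Then β_j = α(I(m^(j) Z)) for j = 1, 2; that is, each factor has minimal degree among curves with its own multiplicity vector. -/

import Mathlib

open MvPolynomial

def VanishToOrder {K : Type*} [Field K] (f : MvPolynomial (Fin 3) K) (p : Fin 3 → K)
    (k : ℕ) : Prop :=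
  ∀ l : List (Fin 3), l.length < k →
    MvPolynomial.eval p (l.foldl (fun g i => MvPolynomial.pderiv i g) f) = 0

/-- α(I(mZ)): the least degree of a nonzero homogeneous polynomial vanishing to order at
least `m i` at each point `P i`. -/
noncomputable def minDegree {K : Type*} [Field K] {r : ℕ} (P : Fin r → (Fin 3 → K))
    (m : Fin r → ℕ) : ℕ :=
  sInf {n | ∃ f : MvPolynomial (Fin 3) K,
    f ≠ 0 ∧ MvPolynomial.IsHomogeneous f n ∧ ∀ i, VanishToOrder f (P i) (m i)}

/-!
In characteristic zero, `f` vanishes to order `k` at `p` (all partial derivatives of order `< k`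
vanish at `p`) iff the Taylor expansion `f(X + p)` has no terms of degree `< k`, i.e. iff `k` is at
most the order of `f(X + p)` as a power series. Orders of power series over a domain are additive,
so `ord_P (C₁ C₂) = ord_P C₁ + ord_P C₂` and hence `m ≤ m₁ + m₂`. If some curve `D` of degree
`< β₁` had multiplicities `m₁`, then `D C₂` would be a curve of degree `< β` with multiplicities
`≥ m`, contradicting the minimality of `β`; symmetrically for `C₂`.
-/

theorem Multiset.degree_toFinsupp {σ : Type*} [DecidableEq σ] (s : Multiset σ) :
    (Multiset.toFinsupp s).degree = Multiset.card s :=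
  Multiset.toFinsupp_sum_eq s

namespace MvPolynomial

variable {σ R : Type*} [CommSemiring R]

theorem exists_coeff_foldl_pderiv [DecidableEq σ] (l : List σ) (f : MvPolynomial σ R)
    (e : σ →₀ ℕ) : ∃ c : ℕ, 0 < c ∧
      coeff e (l.foldl (fun g i => pderiv i g) f) =
        c * coeff (e + Multiset.toFinsupp (l : Multiset σ)) f := by
  induction l generalizing f with
  | nil => exact ⟨1, one_pos, by simp⟩
  | cons i l ih =>
    obtain ⟨c, hc, h⟩ := ih (pderiv i f)
    refine ⟨c * ((e + Multiset.toFinsupp (l : Multiset σ)) i + 1), by positivity, ?_⟩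
    rw [List.foldl_cons, h, coeff_pderiv, ← Multiset.cons_coe, ← Multiset.singleton_add,
      Multiset.toFinsupp_add, Multiset.toFinsupp_singleton, ← add_assoc, add_right_comm e]
    push_cast
    ring

theorem forall_eval_zero_foldl_pderiv_iff [NoZeroDivisors R] [CharZero R]
    (f : MvPolynomial σ R) (k : ℕ) :
    (∀ l : List σ, l.length < k → eval 0 (l.foldl (fun g i => pderiv i g) f) = 0) ↔
      (k : ℕ∞) ≤ (f : MvPowerSeries σ R).order := by
  classical
  have eval_zero_foldl (l : List σ) : ∃ c : ℕ, 0 < c ∧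
      eval 0 (l.foldl (fun g i => pderiv i g) f) = c * coeff (Multiset.toFinsupp l) f := by
    simpa [eval_zero, constantCoeff_eq] using exists_coeff_foldl_pderiv l f 0
  constructor
  · intro h
    refine MvPowerSeries.nat_le_order fun d hd => ?_
    set l := (Finsupp.toMultiset d).toList
    have hl : Multiset.toFinsupp (l : Multiset σ) = d := by simp [l]
    obtain ⟨c, hc, hcl⟩ := eval_zero_foldl l
    rw [h l (by simp only [l, Multiset.length_toList, Finsupp.card_toMultiset]; exact hd), hl,
      eq_comm] at hcl
    simpa [hc.ne'] using hcl
  · intro h l hl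
    obtain ⟨c, -, hcl⟩ := eval_zero_foldl l
    rw [hcl, ← coeff_coe, MvPowerSeries.coeff_of_lt_order, mul_zero]
    rw [Multiset.degree_toFinsupp, Multiset.coe_card]
    exact (Nat.cast_lt.mpr hl).trans_le h

noncomputable def translate (p : σ → R) : MvPolynomial σ R →ₐ[R] MvPolynomial σ R :=
  aeval fun i => X i + C (p i)

theorem pderiv_translate (p : σ → R) (i : σ) (f : MvPolynomial σ R) :
    pderiv i (translate p f) = translate p (pderiv i f) := by
  classical
  induction f using MvPolynomial.induction_on with
  | C a => simp [translate]
  | add f g hf hg => simp [hf, hg]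
  | mul_X f j hf =>
    simp only [map_mul, Derivation.leibniz, smul_eq_mul, map_add, hf]
    simp [translate, pderiv_X, Pi.single_apply]

theorem foldl_pderiv_translate (p : σ → R) (l : List σ) (f : MvPolynomial σ R) :
    l.foldl (fun g i => pderiv i g) (translate p f) =
      translate p (l.foldl (fun g i => pderiv i g) f) := by
  induction l generalizing f with
  | nil => rfl
  | cons i l ih => rw [List.foldl_cons, List.foldl_cons, pderiv_translate, ih]

theorem eval_zero_translate (p : σ → R) (f : MvPolynomial σ R) :
    eval 0 (translate p f) = eval p f := by
  have : (aeval 0).comp (translate p) = aeval p := by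
    ext i
    simp [translate]
  rw [← coe_aeval_eq_eval, ← coe_aeval_eq_eval, ← this]
  rfl

noncomputable def ordAt (p : σ → R) (f : MvPolynomial σ R) : ℕ∞ :=
  (translate p f : MvPowerSeries σ R).order

theorem ordAt_mul [NoZeroDivisors R] (p : σ → R) (f g : MvPolynomial σ R) :
    ordAt p (f * g) = ordAt p f + ordAt p g := by
  rw [ordAt, map_mul, coe_mul, MvPowerSeries.order_mul, ordAt, ordAt]

end MvPolynomial

section VanishToOrder

variable {K : Type*} [Field K]

theorem VanishToOrder.mono {f : MvPolynomial (Fin 3) K} {p : Fin 3 → K} {k k' : ℕ}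
    (hf : VanishToOrder f p k) (hk : k' ≤ k) : VanishToOrder f p k' :=
  fun l hl => hf l (hl.trans_le hk)

variable [CharZero K]

theorem vanishToOrder_iff_le_ordAt (f : MvPolynomial (Fin 3) K) (p : Fin 3 → K) (k : ℕ) :
    VanishToOrder f p k ↔ (k : ℕ∞) ≤ ordAt p f := by
  simp only [VanishToOrder, ordAt, ← forall_eval_zero_foldl_pderiv_iff, foldl_pderiv_translate,
    eval_zero_translate]

theorem ordAt_eq_of_vanishToOrder {f : MvPolynomial (Fin 3) K} {p : Fin 3 → K} {k : ℕ}
    (hk : VanishToOrder f p k) (hk' : ¬ VanishToOrder f p (k + 1)) : ordAt p f = k := by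
  rw [vanishToOrder_iff_le_ordAt] at hk hk'
  push_cast at hk'
  exact le_antisymm ((ENat.lt_add_one_iff (ENat.natCast_ne_top k)).mp (not_le.mp hk')) hk

theorem VanishToOrder.mul {f g : MvPolynomial (Fin 3) K} {p : Fin 3 → K} {a b : ℕ}
    (hf : VanishToOrder f p a) (hg : VanishToOrder g p b) : VanishToOrder (f * g) p (a + b) := by
  rw [vanishToOrder_iff_le_ordAt] at hf hg ⊢
  rw [ordAt_mul, Nat.cast_add]
  exact add_le_add hf hg

end VanishToOrder

section minDegree

variable {K : Type*} [Field K] {r : ℕ} {P : Fin r → (Fin 3 → K)} {m : Fin r → ℕ}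
  {f : MvPolynomial (Fin 3) K} {n : ℕ}

theorem minDegree_le (hf : f ≠ 0) (hfn : f.IsHomogeneous n)
    (hfm : ∀ i, VanishToOrder f (P i) (m i)) : minDegree P m ≤ n :=
  Nat.sInf_le ⟨f, hf, hfn, hfm⟩

theorem exists_isHomogeneous_minDegree (hf : f ≠ 0) (hfn : f.IsHomogeneous n)
    (hfm : ∀ i, VanishToOrder f (P i) (m i)) :
    ∃ g : MvPolynomial (Fin 3) K, g ≠ 0 ∧ g.IsHomogeneous (minDegree P m) ∧
      ∀ i, VanishToOrder g (P i) (m i) :=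
  Nat.sInf_mem (s := {n | ∃ g : MvPolynomial (Fin 3) K,
    g ≠ 0 ∧ g.IsHomogeneous n ∧ ∀ i, VanishToOrder g (P i) (m i)}) ⟨n, f, hf, hfn, hfm⟩

theorem minDegree_le_minDegree_add [CharZero K] {m₁ m₂ : Fin r → ℕ}
    (hm : ∀ i, m i ≤ m₁ i + m₂ i) (hf : f ≠ 0) (hfn : f.IsHomogeneous n)
    (hfm : ∀ i, VanishToOrder f (P i) (m₁ i)) {g : MvPolynomial (Fin 3) K} {n₂ : ℕ}
    (hg : g ≠ 0) (hgn : g.IsHomogeneous n₂) (hgm : ∀ i, VanishToOrder g (P i) (m₂ i)) :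
    minDegree P m ≤ minDegree P m₁ + n₂ := by
  obtain ⟨f₀, hf₀, hf₀n, hf₀m⟩ := exists_isHomogeneous_minDegree hf hfn hfm
  exact minDegree_le (mul_ne_zero hf₀ hg) (hf₀n.mul hgn)
    fun i => ((hf₀m i).mul (hgm i)).mono (hm i)

end minDegree

theorem factors_of_minimal_degree_are_minimal_general (K : Type*) [Field K]
    [CharZero K] {r : ℕ}
    (P : Fin r → (Fin 3 → K))
    (m m₁ m₂ : Fin r → ℕ) (C C₁ C₂ : MvPolynomial (Fin 3) K) (β β₁ β₂ : ℕ)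
    (hC0 : C ≠ 0) (hChom : MvPolynomial.IsHomogeneous C β)
    (hβ : β = minDegree P m)
    (hCvan : ∀ i, VanishToOrder C (P i) (m i))
    (hfact : C = C₁ * C₂) (hC₁0 : C₁ ≠ 0) (hC₂0 : C₂ ≠ 0)
    (hC₁hom : MvPolynomial.IsHomogeneous C₁ β₁) (hC₂hom : MvPolynomial.IsHomogeneous C₂ β₂)
    (hord₁ : ∀ i, VanishToOrder C₁ (P i) (m₁ i) ∧ ¬ VanishToOrder C₁ (P i) (m₁ i + 1))
    (hord₂ : ∀ i, VanishToOrder C₂ (P i) (m₂ i) ∧ ¬ VanishToOrder C₂ (P i) (m₂ i + 1)) :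
    β₁ = minDegree P m₁ ∧ β₂ = minDegree P m₂ := by
  have hm : ∀ i, m i ≤ m₁ i + m₂ i := fun i => by
    have h := (vanishToOrder_iff_le_ordAt C (P i) (m i)).mp (hCvan i)
    rwa [hfact, ordAt_mul, ordAt_eq_of_vanishToOrder (hord₁ i).1 (hord₁ i).2,
      ordAt_eq_of_vanishToOrder (hord₂ i).1 (hord₂ i).2, ← Nat.cast_add, Nat.cast_le] at h
  have hβ₁₂ : β = β₁ + β₂ := hChom.inj_right (hfact ▸ hC₁hom.mul hC₂hom) hC0
  have h₁ := minDegree_le_minDegree_add hm hC₁0 hC₁hom (fun i => (hord₁ i).1) hC₂0 hC₂hom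
    fun i => (hord₂ i).1
  have h₂ := minDegree_le_minDegree_add (fun i => (hm i).trans_eq (add_comm _ _)) hC₂0 hC₂hom
    (fun i => (hord₂ i).1) hC₁0 hC₁hom fun i => (hord₁ i).1
  have h₁' := minDegree_le hC₁0 hC₁hom fun i => (hord₁ i).1
  have h₂' := minDegree_le hC₂0 hC₂hom fun i => (hord₂ i).1
  omega

/-- Each factor of a divisor of minimal degree is of minimal degree for its own
multiplicity vector. -/
theorem factors_of_minimal_degree_are_minimal (K : Type*) [Field K] [IsAlgClosed K]
    [CharZero K] {r : ℕ}
    (P : Fin r → (Fin 3 → K)) (hInj : Function.Injective P) (hP : ∀ i, P i ≠ 0)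
    (m m₁ m₂ : Fin r → ℕ) (C C₁ C₂ : MvPolynomial (Fin 3) K) (β β₁ β₂ : ℕ)
    (hC0 : C ≠ 0) (hChom : MvPolynomial.IsHomogeneous C β)
    (hβ : β = minDegree P m)
    (hCvan : ∀ i, VanishToOrder C (P i) (m i))
    (hfact : C = C₁ * C₂) (hC₁0 : C₁ ≠ 0) (hC₂0 : C₂ ≠ 0)
    (hC₁hom : MvPolynomial.IsHomogeneous C₁ β₁) (hC₂hom : MvPolynomial.IsHomogeneous C₂ β₂)
    (hord₁ : ∀ i, VanishToOrder C₁ (P i) (m₁ i) ∧ ¬ VanishToOrder C₁ (P i) (m₁ i + 1))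
    (hord₂ : ∀ i, VanishToOrder C₂ (P i) (m₂ i) ∧ ¬ VanishToOrder C₂ (P i) (m₂ i + 1)) :
    β₁ = minDegree P m₁ ∧ β₂ = minDegree P m₂ :=
  factors_of_minimal_degree_are_minimal_general K P m m₁ m₂ C C₁ C₂ β β₁ β₂ hC0 hChom hβ hCvan hfact
    hC₁0 hC₂0 hC₁hom hC₂hom hord₁ hord₂
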